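/- arXiv:1308.6730 — 2 statements merged into one kernel-verified Lean document; each statement's English description precedes it below -/
import Mathlib

section
/- Let V be a real inner product space, let u₁, u₂, n ∈ V be unit vectors with n orthogonal to both u₁ and u₂, and let β ∈ [0, π/4]. Define v₂ = (cos β) • u₂ + (sin β) • n. Then the angle between u₁ and v₂ is at least β. -/
open Real InnerProductGeometry

open scoped RealInnerProductSpace

/-!
Since `n ⊥ u₁`, the lifted vector `v₂` satisfies `⟪u₁, v₂⟫ = cos β ⟪u₁, u₂⟫ ≤ cos β ‖u₁‖`, and `v₂`
is again a unit vector because `u₂ ⊥ n`. Hence the cosine of the angle between `u₁` and `v₂` is at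
most `cos β`, and `arccos` is antitone.
-/

section

variable {V : Type*} [NormedAddCommGroup V] [InnerProductSpace ℝ V]

theorem norm_cos_smul_add_sin_smul {u n : V} (hu : ‖u‖ = 1) (hn : ‖n‖ = 1) (hun : ⟪u, n⟫ = 0)
    (β : ℝ) : ‖cos β • u + sin β • n‖ = 1 := by
  have horth : ⟪cos β • u, sin β • n⟫ = 0 := by
    rw [real_inner_smul_left, real_inner_smul_right, hun, mul_zero, mul_zero]
  have hsq := norm_add_sq_eq_norm_sq_add_norm_sq_real horth
  rw [norm_smul, norm_smul, hu, hn, mul_one, mul_one, Real.norm_eq_abs, Real.norm_eq_abs,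
    abs_mul_abs_self, abs_mul_abs_self, ← sq, ← sq, ← sq, cos_sq_add_sin_sq] at hsq
  exact (pow_eq_one_iff_of_nonneg (norm_nonneg _) two_ne_zero).1 hsq

theorem le_angle_of_inner_le_mul_cos {x y : V} {β : ℝ} (hβ : β ≤ π / 2)
    (h : ⟪x, y⟫ ≤ ‖x‖ * ‖y‖ * cos β) : β ≤ angle x y := by
  rcases le_or_gt β 0 with hβ₀ | hβ₀
  · exact hβ₀.trans (angle_nonneg x y)
  rcases (mul_nonneg (norm_nonneg x) (norm_nonneg y)).eq_or_lt with hzero | hpos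
  · rwa [angle, ← hzero, div_zero, arccos_zero]
  · calc β = arccos (cos β) := (arccos_cos hβ₀.le (by linarith [pi_pos])).symm
      _ ≤ angle x y := arccos_le_arccos ((div_le_iff₀ hpos).2 (by linarith))

end

theorem angle_with_lifted_ge_general
    {V : Type*} [NormedAddCommGroup V] [InnerProductSpace ℝ V]
    (u₁ u₂ n : V) (hu₂ : ‖u₂‖ = 1) (hn : ‖n‖ = 1)
    (hn₁ : inner ℝ u₁ n = (0 : ℝ)) (hn₂ : inner ℝ u₂ n = (0 : ℝ))
    (β : ℝ) (hβ : β ∈ Set.Icc 0 (π / 4)) :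
    β ≤ angle u₁ (cos β • u₂ + sin β • n) := by
  obtain ⟨hβ₀, hβ⟩ := hβ
  have hv := norm_cos_smul_add_sin_smul hu₂ hn hn₂ β
  have hcos : 0 ≤ cos β := cos_nonneg_of_mem_Icc ⟨by linarith [pi_pos], by linarith [pi_pos]⟩
  refine le_angle_of_inner_le_mul_cos (by linarith [pi_pos]) ?_
  calc ⟪u₁, cos β • u₂ + sin β • n⟫ = cos β * ⟪u₁, u₂⟫ := by
        rw [inner_add_right, real_inner_smul_right, real_inner_smul_right, hn₁, mul_zero, add_zero]
    _ ≤ cos β * (‖u₁‖ * ‖u₂‖) := mul_le_mul_of_nonneg_left (real_inner_le_norm u₁ u₂) hcos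
    _ = ‖u₁‖ * ‖cos β • u₂ + sin β • n‖ * cos β := by rw [hv, hu₂]; ring

/-- Lemma 2 of the paper: if a unit segment `u₁` lies in a plane and a
unit segment `v₂ = cos β • u₂ + sin β • n` (with `u₂` in the plane and
`n` a unit normal) forms angle `β ≤ π/4` with its projection onto the
plane, then the angle between `u₁` and `v₂` is at least `β`. -/
theorem angle_with_lifted_ge
    {V : Type*} [NormedAddCommGroup V] [InnerProductSpace ℝ V]
    (u₁ u₂ n : V) (hu₁ : ‖u₁‖ = 1) (hu₂ : ‖u₂‖ = 1) (hn : ‖n‖ = 1)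
    (hn₁ : inner ℝ u₁ n = (0 : ℝ)) (hn₂ : inner ℝ u₂ n = (0 : ℝ))
    (β : ℝ) (hβ : β ∈ Set.Icc 0 (π / 4)) :
    β ≤ angle u₁ (cos β • u₂ + sin β • n) :=
  angle_with_lifted_ge_general u₁ u₂ n hu₂ hn hn₁ hn₂ β hβ
end

section
/- There exists a constant c > 0 such that the following holds. Let V be a finite type, let G be a simple graph on V, and let d be a natural number with 1 ≤ d and with the maximum degree of G at most d. Then there exists an injective map p : V → EuclideanSpace ℝ (Fin 3) with ‖p v‖ = 1 for all v (all vertices lie on the unit sphere), such that for every vertex v and every pair of distinct neighbors u, w of v in G, the angle between p u − p v and p w − p v is at least c/d. -/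
/-!
Distinct vertices with a common neighbour form a graph of maximum degree below `d²`, so a greedy
colouring assigns them distinct cells of a `d × d` grid of mesh `1 / d` in the plane. Shifting the
vertices of a colour class horizontally by distinct amounts in `[0, 1/2]` makes the placement
injective while keeping distinct cells `1 / (2d)` apart, and inverse stereographic projection,
bi-Lipschitz on bounded sets, carries it to the unit sphere of `ℝ³` with chords at least `1 / (3d)`.
For three points of a unit sphere the angle at one of them is at least half the chord joining the
other two (an inscribed angle in a circle of radius at most `1`), which gives angular resolution
`1 / (6d)`.
-/

open Real InnerProductGeometry
open scoped RealInnerProductSpace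

section InscribedAngle

variable {E : Type*} [NormedAddCommGroup E] [InnerProductSpace ℝ E] {a b c : E}

/-- The Gram determinant of three unit vectors is nonnegative. -/
theorem sq_inner_sub_inner_mul_inner_le (ha : ‖a‖ = 1) (hb : ‖b‖ = 1) (hc : ‖c‖ = 1) :
    (⟪a, b⟫ - ⟪a, c⟫ * ⟪b, c⟫) ^ 2 ≤ (1 - ⟪a, c⟫ ^ 2) * (1 - ⟪b, c⟫ ^ 2) := by
  have h := real_inner_mul_inner_self_le (a - ⟪a, c⟫ • c) (b - ⟪b, c⟫ • c)
  simp only [inner_sub_left, inner_sub_right, real_inner_smul_left, real_inner_smul_right,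
    real_inner_self_eq_norm_sq, norm_smul, mul_pow, Real.norm_eq_abs, sq_abs, ha, hb, hc,
    real_inner_comm a c, real_inner_comm b c] at h
  linarith

theorem norm_sub_div_two_le_sin_angle (ha : ‖a‖ = 1) (hb : ‖b‖ = 1) (hc : ‖c‖ = 1) :
    ‖a - b‖ / 2 ≤ sin (angle (a - c) (b - c)) := by
  have hab : ‖a - b‖ / 2 ≤ 1 := by linarith [norm_sub_le a b]
  rcases eq_or_ne a c with rfl | hac
  · simpa using hab
  rcases eq_or_ne b c with rfl | hbc
  · simpa using hab
  have hx : 0 < ‖a - c‖ := norm_pos_iff.mpr (sub_ne_zero.mpr hac)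
  have hy : 0 < ‖b - c‖ := norm_pos_iff.mpr (sub_ne_zero.mpr hbc)
  refine le_of_mul_le_mul_right ?_ (mul_pos hx hy)
  rw [sin_angle_mul_norm_mul_norm]
  refine Real.le_sqrt_of_sq_le ?_
  have hxy : ⟪a - c, b - c⟫ = ⟪a, b⟫ - ⟪a, c⟫ - ⟪b, c⟫ + 1 := by
    simp only [inner_sub_left, inner_sub_right, real_inner_self_eq_norm_sq, hc, real_inner_comm b c]
    ring
  simp only [mul_pow, div_pow, norm_sub_sq_real, real_inner_self_eq_norm_sq, ha, hb, hc, hxy]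
  -- the difference of the two sides is exactly the Gram determinant of `a, b, c`
  linear_combination sq_inner_sub_inner_mul_inner_le ha hb hc

theorem norm_sub_div_two_le_angle (ha : ‖a‖ = 1) (hb : ‖b‖ = 1) (hc : ‖c‖ = 1) :
    ‖a - b‖ / 2 ≤ angle (a - c) (b - c) :=
  (norm_sub_div_two_le_sin_angle ha hb hc).trans (sin_le (angle_nonneg _ _))

end InscribedAngle

section Stereographic

variable {E : Type*} [NormedAddCommGroup E] [InnerProductSpace ℝ E] {v w w' : E}

theorem norm_stereoInvFunAux_sub_sq (hv : ‖v‖ = 1) (hw : w ∈ (ℝ ∙ v)ᗮ) (hw' : w' ∈ (ℝ ∙ v)ᗮ) :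
    ‖stereoInvFunAux v w - stereoInvFunAux v w'‖ ^ 2 =
      16 * ‖w - w'‖ ^ 2 / ((‖w‖ ^ 2 + 4) * (‖w'‖ ^ 2 + 4)) := by
  have hwv : ⟪w, v⟫ = 0 := Submodule.mem_orthogonal_singleton_iff_inner_left.mp hw
  have hvw' : ⟪v, w'⟫ = 0 := Submodule.mem_orthogonal_singleton_iff_inner_right.mp hw'
  have hinner : ⟪stereoInvFunAux v w, stereoInvFunAux v w'⟫ =
      (16 * ⟪w, w'⟫ + (‖w‖ ^ 2 - 4) * (‖w'‖ ^ 2 - 4)) / ((‖w‖ ^ 2 + 4) * (‖w'‖ ^ 2 + 4)) := by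
    simp only [stereoInvFunAux_apply, inner_smul_left, inner_smul_right, inner_add_left,
      inner_add_right, hwv, hvw', real_inner_self_eq_norm_sq, hv, RCLike.conj_to_real]
    field_simp
    ring
  rw [norm_sub_sq_real, norm_sub_sq_real, hinner,
    mem_sphere_zero_iff_norm.mp (stereoInvFunAux_mem hv hw),
    mem_sphere_zero_iff_norm.mp (stereoInvFunAux_mem hv hw')]
  field_simp
  ring

theorem le_norm_stereoInvFunAux_sub (hv : ‖v‖ = 1) (hw : w ∈ (ℝ ∙ v)ᗮ) (hw' : w' ∈ (ℝ ∙ v)ᗮ)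
    {r : ℝ} (hr : ‖w‖ ^ 2 ≤ r) (hr' : ‖w'‖ ^ 2 ≤ r) :
    4 * ‖w - w'‖ / (r + 4) ≤ ‖stereoInvFunAux v w - stereoInvFunAux v w'‖ := by
  have hr0 : 0 ≤ r := (sq_nonneg _).trans hr
  refine (pow_le_pow_iff_left₀ (by positivity) (norm_nonneg _) two_ne_zero).mp ?_
  rw [norm_stereoInvFunAux_sub_sq hv hw hw', div_pow, mul_pow, sq (r + 4)]
  gcongr
  norm_num

end Stereographic

section Grid

open Set

theorem one_le_abs_natCast_sub {i j : ℕ} (hij : i ≠ j) : 1 ≤ |(i : ℝ) - j| := by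
  simpa [← Nat.dist_cast_real, Real.dist_eq] using Nat.pairwise_one_le_dist hij

theorem half_le_abs_natCast_add_sub {i j : ℕ} (hij : i ≠ j) {t t' : ℝ} (ht : t ∈ Icc 0 (1 / 2))
    (ht' : t' ∈ Icc 0 (1 / 2)) : 1 / 2 ≤ |(i + t) - (j + t')| := by
  have hij := one_le_abs_natCast_sub hij
  have htt' : |t' - t| ≤ 1 / 2 :=
    abs_sub_le_iff.mpr ⟨by linarith [ht.1, ht'.2], by linarith [ht.2, ht'.1]⟩
  have := abs_sub_abs_le_abs_sub ((i : ℝ) - j) (t' - t)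
  rw [show (i : ℝ) - j - (t' - t) = i + t - (j + t') by ring] at this
  linarith

noncomputable def gridPoint (d : ℕ) (c : Fin d × Fin d) (t : ℝ) : EuclideanSpace ℝ (Fin 3) :=
  (d : ℝ)⁻¹ • !₂[c.1 + t, c.2, 0]

variable {d : ℕ} {c c' : Fin d × Fin d} {t t' : ℝ}

theorem gridPoint_mem_orthogonal : gridPoint d c t ∈ (ℝ ∙ EuclideanSpace.single 2 1)ᗮ := by
  rw [Submodule.mem_orthogonal_singleton_iff_inner_right, EuclideanSpace.inner_single_left]
  simp [gridPoint]

theorem norm_gridPoint_sq_le (ht : t ∈ Icc 0 (1 / 2)) : ‖gridPoint d c t‖ ^ 2 ≤ 2 := by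
  have hd : (0 : ℝ) < d := by exact_mod_cast c.1.pos
  have hx : (d : ℝ)⁻¹ * (c.1 + t) ≤ 1 := by
    rw [inv_mul_le_iff₀ hd]
    linarith [ht.2, (show (c.1 : ℝ) + 1 ≤ d by exact_mod_cast c.1.isLt)]
  have hy : (d : ℝ)⁻¹ * c.2 ≤ 1 := by
    rw [inv_mul_le_iff₀ hd]
    linarith [(show (c.2 : ℝ) + 1 ≤ d by exact_mod_cast c.2.isLt)]
  rw [EuclideanSpace.norm_sq_eq, Fin.sum_univ_three]
  simp only [gridPoint, PiLp.smul_apply, smul_eq_mul, Matrix.cons_val_zero, Matrix.cons_val_one,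
    Matrix.cons_val, mul_zero, norm_eq_abs, sq_abs, zero_pow two_ne_zero, add_zero]
  linarith [pow_le_one₀ (n := 2) (by positivity [ht.1]) hx, pow_le_one₀ (n := 2) (by positivity) hy]

theorem one_div_two_mul_le_norm_gridPoint_sub (hc : c ≠ c') (ht : t ∈ Icc 0 (1 / 2))
    (ht' : t' ∈ Icc 0 (1 / 2)) : 1 / (2 * d) ≤ ‖gridPoint d c t - gridPoint d c' t'‖ := by
  have hcoord (i : Fin 3) :
      (d : ℝ)⁻¹ * |(!₂[(c.1 : ℝ) + t, c.2, 0] - !₂[(c'.1 : ℝ) + t', c'.2, 0]) i|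
        ≤ ‖gridPoint d c t - gridPoint d c' t'‖ := by
    rw [gridPoint, gridPoint, ← smul_sub, norm_smul, norm_inv, RCLike.norm_natCast]
    gcongr
    exact PiLp.norm_apply_le (β := fun _ : Fin 3 => ℝ) _ i
  suffices h : 1 / 2 ≤ |(c.1 + t) - (c'.1 + t')| ∨ 1 / 2 ≤ |(c.2 : ℝ) - c'.2| by
    rw [show 1 / (2 * (d : ℝ)) = (d : ℝ)⁻¹ * (1 / 2) by ring]
    rcases h with h | h
    · exact le_trans (by gcongr; simpa using h) (hcoord 0)
    · exact le_trans (by gcongr; simpa using h) (hcoord 1)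
  by_cases h1 : c.1 = c'.1
  · have h2 : (c.2 : ℕ) ≠ c'.2 := fun h => hc (Prod.ext h1 (Fin.ext h))
    exact Or.inr (by linarith [one_le_abs_natCast_sub h2])
  · exact Or.inl (half_le_abs_natCast_add_sub (Fin.val_ne_of_ne h1) ht ht')

theorem gridPoint_inj (ht : t ∈ Icc 0 (1 / 2)) (ht' : t' ∈ Icc 0 (1 / 2))
    (h : gridPoint d c t = gridPoint d c' t') : c = c' ∧ t = t' := by
  have hc : c = c' := by
    by_contra hc
    have := one_div_two_mul_le_norm_gridPoint_sub hc ht ht'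
    rw [h, sub_self, norm_zero] at this
    have hd : (0 : ℝ) < d := by exact_mod_cast c.1.pos
    linarith [show 0 < 1 / (2 * (d : ℝ)) by positivity]
  subst hc
  refine ⟨rfl, ?_⟩
  have h0 := congrArg (· 0) h
  simp only [gridPoint, PiLp.smul_apply, smul_eq_mul, Matrix.cons_val_zero] at h0
  have hd : (d : ℝ)⁻¹ ≠ 0 := inv_ne_zero (by exact_mod_cast c.1.pos.ne')
  linarith [mul_left_cancel₀ hd h0]

noncomputable def spherePoint (d : ℕ) (c : Fin d × Fin d) (t : ℝ) : EuclideanSpace ℝ (Fin 3) :=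
  stereoInvFunAux (EuclideanSpace.single 2 1) (gridPoint d c t)

theorem norm_spherePoint : ‖spherePoint d c t‖ = 1 :=
  mem_sphere_zero_iff_norm.mp (stereoInvFunAux_mem (by simp) gridPoint_mem_orthogonal)

theorem le_norm_spherePoint_sub (ht : t ∈ Icc 0 (1 / 2)) (ht' : t' ∈ Icc 0 (1 / 2)) :
    2 / 3 * ‖gridPoint d c t - gridPoint d c' t'‖ ≤ ‖spherePoint d c t - spherePoint d c' t'‖ := by
  have := le_norm_stereoInvFunAux_sub (by simp) gridPoint_mem_orthogonal gridPoint_mem_orthogonal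
    (norm_gridPoint_sq_le (c := c) ht) (norm_gridPoint_sq_le (c := c') ht')
  rw [spherePoint, spherePoint]
  linarith

theorem one_div_three_mul_le_norm_spherePoint_sub (hc : c ≠ c') (ht : t ∈ Icc 0 (1 / 2))
    (ht' : t' ∈ Icc 0 (1 / 2)) : 1 / (3 * d) ≤ ‖spherePoint d c t - spherePoint d c' t'‖ := by
  calc 1 / (3 * (d : ℝ)) = 2 / 3 * (1 / (2 * d)) := by ring
    _ ≤ 2 / 3 * ‖gridPoint d c t - gridPoint d c' t'‖ := by
        gcongr
        exact one_div_two_mul_le_norm_gridPoint_sub hc ht ht'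
    _ ≤ _ := le_norm_spherePoint_sub ht ht'

theorem spherePoint_inj (ht : t ∈ Icc 0 (1 / 2)) (ht' : t' ∈ Icc 0 (1 / 2))
    (h : spherePoint d c t = spherePoint d c' t') : c = c' ∧ t = t' := by
  have := le_norm_spherePoint_sub (c := c) (c' := c') ht ht'
  rw [h, sub_self, norm_zero] at this
  refine gridPoint_inj ht ht' (sub_eq_zero.mp (norm_eq_zero.mp ?_))
  linarith [norm_nonneg (gridPoint d c t - gridPoint d c' t')]

end Grid
namespace SimpleGraph

open Finset

variable {V : Type*} (G : SimpleGraph V)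

def commonNeighborGraph : SimpleGraph V where
  Adj u w := u ≠ w ∧ ∃ v, G.Adj v u ∧ G.Adj v w
  symm := ⟨fun _ _ ⟨huw, v, hu, hw⟩ => ⟨huw.symm, v, hw, hu⟩⟩
  loopless := ⟨fun _ h => h.1 rfl⟩

theorem degree_commonNeighborGraph_le [Fintype V] [DecidableRel G.Adj]
    [DecidableRel G.commonNeighborGraph.Adj] (u : V) :
    G.commonNeighborGraph.degree u ≤ G.maxDegree * (G.maxDegree - 1) := by
  classical
  have hsub : G.commonNeighborGraph.neighborFinset u ⊆
      (G.neighborFinset u).biUnion fun v => (G.neighborFinset v).erase u := by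
    intro w hw
    obtain ⟨huw, v, hu, hw⟩ := (G.commonNeighborGraph.mem_neighborFinset u w).mp hw
    exact mem_biUnion.mpr ⟨v, (G.mem_neighborFinset u v).mpr hu.symm,
      mem_erase.mpr ⟨huw.symm, (G.mem_neighborFinset v w).mpr hw⟩⟩
  calc G.commonNeighborGraph.degree u
      ≤ ∑ v ∈ G.neighborFinset u, ((G.neighborFinset v).erase u).card :=
        (card_le_card hsub).trans card_biUnion_le
    _ ≤ ∑ _v ∈ G.neighborFinset u, (G.maxDegree - 1) := by
        refine sum_le_sum fun v hv => ?_
        have huv : u ∈ G.neighborFinset v := (G.mem_neighborFinset v u).mpr (G.adj_symm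
          ((G.mem_neighborFinset u v).mp hv))
        rw [card_erase_of_mem huv, card_neighborFinset_eq_degree]
        exact Nat.sub_le_sub_right (G.degree_le_maxDegree v) 1
    _ = G.degree u * (G.maxDegree - 1) := by
        rw [sum_const, card_neighborFinset_eq_degree, smul_eq_mul]
    _ ≤ G.maxDegree * (G.maxDegree - 1) := Nat.mul_le_mul_right _ (G.degree_le_maxDegree u)

theorem nonempty_coloring_of_forall_degree_lt {α : Type*} [Fintype V] [DecidableRel G.Adj]
    [Fintype α] (h : ∀ v, G.degree v < Fintype.card α) : Nonempty (G.Coloring α) := by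
  classical
  have hne : Nonempty (V → α) := by
    rcases isEmpty_or_nonempty V with _ | ⟨⟨v⟩⟩
    · exact ⟨isEmptyElim⟩
    · exact ⟨fun _ => Classical.choice (Fintype.card_pos_iff.mp ((Nat.zero_le _).trans_lt (h v)))⟩
  suffices ∀ s : Finset V, ∃ f : V → α, ∀ u ∈ s, ∀ w ∈ s, G.Adj u w → f u ≠ f w by
    obtain ⟨f, hf⟩ := this univ
    exact ⟨Coloring.mk f fun {u w} huw => hf u (mem_univ u) w (mem_univ w) huw⟩
  intro s
  induction s using Finset.induction_on with
  | empty => exact ⟨Classical.choice hne, by simp⟩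
  | @insert a s ha ih =>
    obtain ⟨f, hf⟩ := ih
    obtain ⟨c, -, hc⟩ := exists_mem_notMem_of_card_lt_card
      (s := (G.neighborFinset a).image f) (t := univ)
      ((card_image_le.trans_eq (G.card_neighborFinset_eq_degree a)).trans_lt (h a))
    have hc' {w : V} (hw : G.Adj a w) : c ≠ f w := fun hcw =>
      hc (hcw ▸ mem_image_of_mem f ((G.mem_neighborFinset a w).mpr hw))
    refine ⟨Function.update f a c, fun u hu w hw huw => ?_⟩
    simp only [Function.update_apply]
    split_ifs with hua hwa hwa
    · exact (G.irrefl (hua ▸ hwa ▸ huw)).elim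
    · exact hc' (hua ▸ huw)
    · exact (hc' (hwa ▸ huw.symm)).symm
    · exact hf u ((mem_insert.mp hu).resolve_left hua) w ((mem_insert.mp hw).resolve_left hwa) huw

end SimpleGraph

/-- Theorem 1 of the paper: there is a constant `c > 0` such that every
graph of maximum degree at most `d` (with `d ≥ 1`) has a 3D straight-line
drawing with all vertices on the unit sphere and angular resolution at
least `c / d`. -/
theorem exists_sphere_drawing_angular_resolution :
    ∃ c : ℝ, 0 < c ∧
      ∀ (V : Type) [Fintype V] (G : SimpleGraph V) [DecidableRel G.Adj] (d : ℕ),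
        1 ≤ d → G.maxDegree ≤ d →
        ∃ p : V → EuclideanSpace ℝ (Fin 3),
          Function.Injective p ∧
          (∀ v, ‖p v‖ = 1) ∧
          ∀ v u w : V, G.Adj v u → G.Adj v w → u ≠ w →
            c / d ≤ angle (p u - p v) (p w - p v) := by
  refine ⟨1 / 6, by norm_num, fun V _ G _ d hd hG => ?_⟩
  classical
  obtain ⟨col⟩ : Nonempty (G.commonNeighborGraph.Coloring (Fin d × Fin d)) := by
    refine G.commonNeighborGraph.nonempty_coloring_of_forall_degree_lt fun v => ?_
    calc G.commonNeighborGraph.degree v ≤ G.maxDegree * (G.maxDegree - 1) :=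
          G.degree_commonNeighborGraph_le v
      _ ≤ d * (d - 1) := Nat.mul_le_mul hG (Nat.sub_le_sub_right hG 1)
      _ < Fintype.card (Fin d × Fin d) := by
          rw [Fintype.card_prod, Fintype.card_fin]
          exact Nat.mul_lt_mul_of_pos_left (by omega) hd
  obtain ⟨k, hk⟩ := Countable.exists_injective_nat V
  let t : V ↪ Set.Icc (0 : ℝ) (1 / 2) :=
    (⟨k, hk⟩ : V ↪ ℕ).trans ((Set.Icc_infinite (by norm_num : (0 : ℝ) < 1 / 2)).natEmbedding _)
  refine ⟨fun v => spherePoint d (col v) (t v),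
    fun u u' h => t.injective (Subtype.ext (spherePoint_inj (t u).2 (t u').2 h).2),
    fun v => norm_spherePoint, fun v u w hu hw huw => ?_⟩
  calc 1 / 6 / (d : ℝ) = 1 / (3 * d) / 2 := by ring
    _ ≤ ‖spherePoint d (col u) (t u) - spherePoint d (col w) (t w)‖ / 2 := by
        gcongr
        exact one_div_three_mul_le_norm_spherePoint_sub (col.valid ⟨huw, v, hu, hw⟩) (t u).2 (t w).2
    _ ≤ _ := norm_sub_div_two_le_angle norm_spherePoint norm_spherePoint norm_spherePoint
end
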